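/- arXiv:2101.08160 — 5 statements merged into one kernel-verified Lean document; each statement's English description precedes it below -/
import Mathlib

section
/- Under Gauss' variational equations, the parameter σ = Ω + ω + v − s (the difference between the true longitude and the ideal anomaly) is differentiable with derivative σ'(t) = √(a(1−e²)/μ) · tan(i/2) · sin(ω+v)/(1+e·cos(v)) · ϱ_N(t) at every t; in particular σ' does not depend on the radial and transverse perturbations ϱ_R and ϱ_T (the R- and T-contributions coming from ω', v' and s' cancel exactly). -/
/-!
The radial and transverse terms of `ω'` and `v'` are exactly opposite, and `s'` is the Keplerian
part of `v'`, so only the normal terms of `Ω'` and `ω'` survive in `σ'`. They combine through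
`csc i - cot i = tan (i / 2)`.
-/

open Real

/-- Holds without side conditions: if `sin x = 0`, then `tan (x / 2)` takes the junk value `0`. -/
theorem Real.cot_eq_inv_sin_sub_tan_half (x : ℝ) : cot x = (sin x)⁻¹ - tan (x / 2) := by
  obtain ⟨y, rfl⟩ : ∃ y, x = 2 * y := ⟨x / 2, by ring⟩
  rw [cot_eq_cos_div_sin, tan_eq_sin_div_cos, sin_two_mul, cos_two_mul',
    mul_div_cancel_left₀ y two_ne_zero]
  rcases eq_or_ne (sin y) 0 with hs | hs
  · simp [hs]
  rcases eq_or_ne (cos y) 0 with hc | hc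
  · simp [hc]
  field_simp
  linear_combination sin_sq_add_cos_sq y

theorem sigma_deriv_depends_only_on_normal_perturbation_general
    (μ : ℝ) (a e i ω Ω v s ϱR ϱT ϱN : ℝ → ℝ)
    (hΩ : ∀ t, HasDerivAt Ω
      (Real.sqrt (a t * (1 - (e t) ^ 2) / μ) *
        (Real.sin (v t + ω t) / ((1 + e t * Real.cos (v t)) * Real.sin (i t)) * ϱN t)) t)
    (hω : ∀ t, HasDerivAt ω
      (Real.sqrt (a t * (1 - (e t) ^ 2) / μ) *
        (-(Real.cos (v t) / e t) * ϱR t +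
          (2 + e t * Real.cos (v t)) * Real.sin (v t) / (e t * (1 + e t * Real.cos (v t))) * ϱT t -
          Real.sin (v t + ω t) * Real.cot (i t) / (1 + e t * Real.cos (v t)) * ϱN t)) t)
    (hV : ∀ t, HasDerivAt v
      (Real.sqrt (μ / (a t) ^ 3) * (1 + e t * Real.cos (v t)) ^ 2 / (1 - (e t) ^ 2) ^ ((3 : ℝ) / 2) +
        Real.sqrt (a t * (1 - (e t) ^ 2) / μ) *
          (Real.cos (v t) / e t * ϱR t -
            (2 + e t * Real.cos (v t)) * Real.sin (v t) / (e t * (1 + e t * Real.cos (v t))) * ϱT t)) t)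
    (hS : ∀ t, HasDerivAt s
      (Real.sqrt (μ / (a t) ^ 3) * (1 + e t * Real.cos (v t)) ^ 2 / (1 - (e t) ^ 2) ^ ((3 : ℝ) / 2)) t) :
    ∀ t, HasDerivAt (fun τ => Ω τ + ω τ + v τ - s τ)
      (Real.sqrt (a t * (1 - (e t) ^ 2) / μ) * Real.tan (i t / 2) *
        (Real.sin (ω t + v t) / (1 + e t * Real.cos (v t))) * ϱN t) t := by
  intro t
  refine ((((hΩ t).add (hω t)).add (hV t)).sub (hS t)).congr_deriv ?_
  rw [cot_eq_inv_sin_sub_tan_half, add_comm (ω t), div_eq_mul_inv _ (_ * _), mul_inv]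
  ring

/-- Under Gauss' variational equations, σ = Ω + ω + v − s is differentiable with
σ' = √(a(1−e²)/μ)·tan(i/2)·sin(ω+v)/(1+e·cos v)·ϱ_N; in particular σ' does not
depend on the radial and transverse perturbations. -/
theorem sigma_deriv_depends_only_on_normal_perturbation
    (μ : ℝ) (a e i ω Ω v s ϱR ϱT ϱN : ℝ → ℝ)
    (hμ : 0 < μ)
    (ha : ∀ t, 0 < a t)
    (he0 : ∀ t, 0 < e t) (he1 : ∀ t, e t < 1)
    (hsini : ∀ t, Real.sin (i t) ≠ 0)
    (hcosi : ∀ t, Real.cos (i t / 2) ≠ 0)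
    (hden : ∀ t, 0 < 1 + e t * Real.cos (v t))
    (hA : ∀ t, HasDerivAt a
      (2 * (a t) ^ 2 / Real.sqrt (μ * a t * (1 - (e t) ^ 2)) *
        (e t * Real.sin (v t) * ϱR t + (1 + e t * Real.cos (v t)) * ϱT t)) t)
    (hE : ∀ t, HasDerivAt e
      (Real.sqrt (a t * (1 - (e t) ^ 2) / μ) *
        (Real.sin (v t) * ϱR t +
          (e t + (2 + e t * Real.cos (v t)) * Real.cos (v t)) / (1 + e t * Real.cos (v t)) * ϱT t)) t)
    (hI : ∀ t, HasDerivAt i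
      (Real.sqrt (a t * (1 - (e t) ^ 2) / μ) *
        (Real.cos (v t + ω t) / (1 + e t * Real.cos (v t)) * ϱN t)) t)
    (hΩ : ∀ t, HasDerivAt Ω
      (Real.sqrt (a t * (1 - (e t) ^ 2) / μ) *
        (Real.sin (v t + ω t) / ((1 + e t * Real.cos (v t)) * Real.sin (i t)) * ϱN t)) t)
    (hω : ∀ t, HasDerivAt ω
      (Real.sqrt (a t * (1 - (e t) ^ 2) / μ) *
        (-(Real.cos (v t) / e t) * ϱR t +
          (2 + e t * Real.cos (v t)) * Real.sin (v t) / (e t * (1 + e t * Real.cos (v t))) * ϱT t -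
          Real.sin (v t + ω t) * Real.cot (i t) / (1 + e t * Real.cos (v t)) * ϱN t)) t)
    (hV : ∀ t, HasDerivAt v
      (Real.sqrt (μ / (a t) ^ 3) * (1 + e t * Real.cos (v t)) ^ 2 / (1 - (e t) ^ 2) ^ ((3 : ℝ) / 2) +
        Real.sqrt (a t * (1 - (e t) ^ 2) / μ) *
          (Real.cos (v t) / e t * ϱR t -
            (2 + e t * Real.cos (v t)) * Real.sin (v t) / (e t * (1 + e t * Real.cos (v t))) * ϱT t)) t)
    (hS : ∀ t, HasDerivAt s
      (Real.sqrt (μ / (a t) ^ 3) * (1 + e t * Real.cos (v t)) ^ 2 / (1 - (e t) ^ 2) ^ ((3 : ℝ) / 2)) t) :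
    ∀ t, HasDerivAt (fun τ => Ω τ + ω τ + v τ - s τ)
      (Real.sqrt (a t * (1 - (e t) ^ 2) / μ) * Real.tan (i t / 2) *
        (Real.sin (ω t + v t) / (1 + e t * Real.cos (v t))) * ϱN t) t :=
  sigma_deriv_depends_only_on_normal_perturbation_general μ a e i ω Ω v s ϱR ϱT ϱN hΩ hω hV hS
end

section
/- Under Gauss' variational equations, the semiparameter p = a(1−e²) is differentiable with derivative p'(t) = 2·(a(1−e²)/(1+e·cos(v)))·√(a(1−e²)/μ)·ϱ_T(t) at every t; in particular p' does not depend on the radial and normal perturbations ϱ_R and ϱ_N. -/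
open Real

/-!
Differentiating `p = a (1 - e²)` gives `p' = a' (1 - e²) - 2 a e e'`. Gauss' equations make the
`ϱ_R`-terms of `a' (1 - e²)` and `2 a e e'` both equal to `2 a e sin v √(p/μ) ϱ_R`, so they cancel,
and the `ϱ_T`-coefficients combine to `2 a √(p/μ) (1 - e²) / (1 + e cos v)`.
-/

lemma sq_div_sqrt_mul_mul_eq {μ a q : ℝ} (hμ : 0 < μ) (ha : 0 < a) (hq : 0 < q) :
    a ^ 2 / √(μ * a * q) * q = a * √(a * q / μ) := by
  have hsqrt : √(a * q / μ) = √(μ * a * q) / μ := by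
    rw [show a * q / μ = μ * a * q / μ ^ 2 by field_simp, sqrt_div (by positivity),
      sqrt_sq hμ.le]
  have hpos : 0 < √(μ * a * q) := sqrt_pos.mpr (by positivity)
  rw [hsqrt]
  field_simp
  rw [sq_sqrt (by positivity)]

lemma one_add_mul_sub_mul_div_eq {e c : ℝ} (h : 1 + e * c ≠ 0) :
    (1 + e * c) - e * ((e + (2 + e * c) * c) / (1 + e * c)) = (1 - e ^ 2) / (1 + e * c) := by
  field_simp
  ring

theorem semiparameter_deriv_depends_only_on_transverse_perturbation_general
    (μ : ℝ) (a e v ϱR ϱT : ℝ → ℝ)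
    (hμ : 0 < μ)
    (ha : ∀ t, 0 < a t)
    (he0 : ∀ t, 0 < e t) (he1 : ∀ t, e t < 1)
    (hden : ∀ t, 0 < 1 + e t * Real.cos (v t))
    (hA : ∀ t, HasDerivAt a
      (2 * (a t) ^ 2 / Real.sqrt (μ * a t * (1 - (e t) ^ 2)) *
        (e t * Real.sin (v t) * ϱR t + (1 + e t * Real.cos (v t)) * ϱT t)) t)
    (hE : ∀ t, HasDerivAt e
      (Real.sqrt (a t * (1 - (e t) ^ 2) / μ) *
        (Real.sin (v t) * ϱR t +
          (e t + (2 + e t * Real.cos (v t)) * Real.cos (v t)) / (1 + e t * Real.cos (v t)) * ϱT t)) t) :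
    ∀ t, HasDerivAt (fun τ => a τ * (1 - (e τ) ^ 2))
      (2 * (a t * (1 - (e t) ^ 2) / (1 + e t * Real.cos (v t))) *
        Real.sqrt (a t * (1 - (e t) ^ 2) / μ) * ϱT t) t := by
  intro t
  have hq : 0 < 1 - e t ^ 2 := by nlinarith [he0 t, he1 t]
  have hcoeff := sq_div_sqrt_mul_mul_eq hμ (ha t) hq
  have htangential := one_add_mul_sub_mul_div_eq (e := e t) (c := cos (v t)) (hden t).ne'
  refine ((hA t).mul (((hE t).fun_pow 2).const_sub 1)).congr_deriv ?_
  linear_combination 2 * (e t * sin (v t) * ϱR t + (1 + e t * cos (v t)) * ϱT t) * hcoeff +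
    2 * a t * √(a t * (1 - e t ^ 2) / μ) * ϱT t * htangential

/-- Under Gauss' variational equations, the semiparameter p = a(1−e²) is differentiable with
p' = 2·(a(1−e²)/(1+e·cos v))·√(a(1−e²)/μ)·ϱ_T; in particular p' does not depend on ϱ_R, ϱ_N. -/
theorem semiparameter_deriv_depends_only_on_transverse_perturbation
    (μ : ℝ) (a e i ω Ω v s ϱR ϱT ϱN : ℝ → ℝ)
    (hμ : 0 < μ)
    (ha : ∀ t, 0 < a t)
    (he0 : ∀ t, 0 < e t) (he1 : ∀ t, e t < 1)
    (hsini : ∀ t, Real.sin (i t) ≠ 0)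
    (hcosi : ∀ t, Real.cos (i t / 2) ≠ 0)
    (hden : ∀ t, 0 < 1 + e t * Real.cos (v t))
    (hA : ∀ t, HasDerivAt a
      (2 * (a t) ^ 2 / Real.sqrt (μ * a t * (1 - (e t) ^ 2)) *
        (e t * Real.sin (v t) * ϱR t + (1 + e t * Real.cos (v t)) * ϱT t)) t)
    (hE : ∀ t, HasDerivAt e
      (Real.sqrt (a t * (1 - (e t) ^ 2) / μ) *
        (Real.sin (v t) * ϱR t +
          (e t + (2 + e t * Real.cos (v t)) * Real.cos (v t)) / (1 + e t * Real.cos (v t)) * ϱT t)) t)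
    (hI : ∀ t, HasDerivAt i
      (Real.sqrt (a t * (1 - (e t) ^ 2) / μ) *
        (Real.cos (v t + ω t) / (1 + e t * Real.cos (v t)) * ϱN t)) t)
    (hΩ : ∀ t, HasDerivAt Ω
      (Real.sqrt (a t * (1 - (e t) ^ 2) / μ) *
        (Real.sin (v t + ω t) / ((1 + e t * Real.cos (v t)) * Real.sin (i t)) * ϱN t)) t)
    (hω : ∀ t, HasDerivAt ω
      (Real.sqrt (a t * (1 - (e t) ^ 2) / μ) *
        (-(Real.cos (v t) / e t) * ϱR t +
          (2 + e t * Real.cos (v t)) * Real.sin (v t) / (e t * (1 + e t * Real.cos (v t))) * ϱT t -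
          Real.sin (v t + ω t) * Real.cot (i t) / (1 + e t * Real.cos (v t)) * ϱN t)) t)
    (hV : ∀ t, HasDerivAt v
      (Real.sqrt (μ / (a t) ^ 3) * (1 + e t * Real.cos (v t)) ^ 2 / (1 - (e t) ^ 2) ^ ((3 : ℝ) / 2) +
        Real.sqrt (a t * (1 - (e t) ^ 2) / μ) *
          (Real.cos (v t) / e t * ϱR t -
            (2 + e t * Real.cos (v t)) * Real.sin (v t) / (e t * (1 + e t * Real.cos (v t))) * ϱT t)) t)
    (hS : ∀ t, HasDerivAt s
      (Real.sqrt (μ / (a t) ^ 3) * (1 + e t * Real.cos (v t)) ^ 2 / (1 - (e t) ^ 2) ^ ((3 : ℝ) / 2)) t) :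
    ∀ t, HasDerivAt (fun τ => a τ * (1 - (e τ) ^ 2))
      (2 * (a t * (1 - (e t) ^ 2) / (1 + e t * Real.cos (v t))) *
        Real.sqrt (a t * (1 - (e t) ^ 2) / μ) * ϱT t) t :=
  semiparameter_deriv_depends_only_on_transverse_perturbation_general μ a e v ϱR ϱT hμ ha he0 he1
    hden hA hE
end

section
/- Under Gauss' variational equations, the rotated eccentricity-vector components e_x = e·cos(Ω+ω)·cos(σ) + e·sin(Ω+ω)·sin(σ) and e_y = −e·cos(Ω+ω)·sin(σ) + e·sin(Ω+ω)·cos(σ), where σ = Ω + ω + v − s, are differentiable with derivatives e_x'(t) = √(a(1−e²)/μ)·( sin(s)·ϱ_R + (2·cos(s) + e·sin(v)·sin(s)/(1+e·cos(v)))·ϱ_T ) and e_y'(t) = √(a(1−e²)/μ)·( −cos(s)·ϱ_R + (2·sin(s) − e·sin(v)·cos(s)/(1+e·cos(v)))·ϱ_T ) at every t; in particular neither derivative depends on the normal perturbation ϱ_N. -/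
open Real

/-!
The rotation by `Ω + ω` cancels: `e_x = e · cos (s - v)` and `e_y = e · sin (s - v)`, so
`e_x + i e_y = e · exp (i (s - v))` involves only `e` and `s - v`. In Gauss' equations neither
`e'` nor `(s - v)' = s' - v'` contains `ϱ_N` (the Keplerian mean motion cancels in `s' - v'`),
and the stated derivatives follow by the product rule and `sin² v + cos² v = 1`.
-/

lemma cos_mul_cos_sub_add_sin_mul_sin_sub (α β : ℝ) :
    cos α * cos (α - β) + sin α * sin (α - β) = cos β := by
  rw [← cos_sub, sub_sub_cancel]

lemma sin_mul_cos_sub_sub_cos_mul_sin_sub (α β : ℝ) :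
    sin α * cos (α - β) - cos α * sin (α - β) = sin β := by
  rw [← sin_sub, sub_sub_cancel]

section GaussRates

variable {e v : ℝ} (s c ϱR ϱT : ℝ)

lemma gauss_rotated_eccentricity_x_rate (he : e ≠ 0) (hden : 1 + e * cos v ≠ 0) :
    c * (sin v * ϱR + (e + (2 + e * cos v) * cos v) / (1 + e * cos v) * ϱT) * cos (s - v)
      + e * sin (s - v) * (c * (cos v / e * ϱR
          - (2 + e * cos v) * sin v / (e * (1 + e * cos v)) * ϱT))
    = c * (sin s * ϱR + (2 * cos s + e * sin v * sin s / (1 + e * cos v)) * ϱT) := by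
  rw [cos_sub, sin_sub]
  field_simp
  linear_combination (c * ϱR * sin s * (1 + e * cos v) + c * ϱT * cos s * (2 + e * cos v))
    * sin_sq_add_cos_sq v

lemma gauss_rotated_eccentricity_y_rate (he : e ≠ 0) (hden : 1 + e * cos v ≠ 0) :
    c * (sin v * ϱR + (e + (2 + e * cos v) * cos v) / (1 + e * cos v) * ϱT) * sin (s - v)
      - e * cos (s - v) * (c * (cos v / e * ϱR
          - (2 + e * cos v) * sin v / (e * (1 + e * cos v)) * ϱT))
    = c * (-cos s * ϱR + (2 * sin s - e * sin v * cos s / (1 + e * cos v)) * ϱT) := by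
  rw [cos_sub, sin_sub]
  field_simp
  linear_combination (c * ϱT * sin s * (2 + e * cos v) - c * ϱR * cos s * (1 + e * cos v))
    * sin_sq_add_cos_sq v

end GaussRates

theorem rotated_eccentricity_deriv_independent_of_normal_perturbation_general
    (μ : ℝ) (a e ω Ω v s ϱR ϱT : ℝ → ℝ)
    (he0 : ∀ t, 0 < e t)
    (hden : ∀ t, 0 < 1 + e t * Real.cos (v t))
    (hE : ∀ t, HasDerivAt e
      (Real.sqrt (a t * (1 - (e t) ^ 2) / μ) *
        (Real.sin (v t) * ϱR t +
          (e t + (2 + e t * Real.cos (v t)) * Real.cos (v t)) / (1 + e t * Real.cos (v t)) * ϱT t)) t)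
    (hV : ∀ t, HasDerivAt v
      (Real.sqrt (μ / (a t) ^ 3) * (1 + e t * Real.cos (v t)) ^ 2 / (1 - (e t) ^ 2) ^ ((3 : ℝ) / 2) +
        Real.sqrt (a t * (1 - (e t) ^ 2) / μ) *
          (Real.cos (v t) / e t * ϱR t -
            (2 + e t * Real.cos (v t)) * Real.sin (v t) / (e t * (1 + e t * Real.cos (v t))) * ϱT t)) t)
    (hS : ∀ t, HasDerivAt s
      (Real.sqrt (μ / (a t) ^ 3) * (1 + e t * Real.cos (v t)) ^ 2 / (1 - (e t) ^ 2) ^ ((3 : ℝ) / 2)) t) :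
    ∀ t,
      HasDerivAt (fun τ => e τ * Real.cos (Ω τ + ω τ) * Real.cos (Ω τ + ω τ + v τ - s τ) +
          e τ * Real.sin (Ω τ + ω τ) * Real.sin (Ω τ + ω τ + v τ - s τ))
        (Real.sqrt (a t * (1 - (e t) ^ 2) / μ) *
          (Real.sin (s t) * ϱR t +
            (2 * Real.cos (s t) +
              e t * Real.sin (v t) * Real.sin (s t) / (1 + e t * Real.cos (v t))) * ϱT t)) t ∧
      HasDerivAt (fun τ => -(e τ * Real.cos (Ω τ + ω τ)) * Real.sin (Ω τ + ω τ + v τ - s τ) +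
          e τ * Real.sin (Ω τ + ω τ) * Real.cos (Ω τ + ω τ + v τ - s τ))
        (Real.sqrt (a t * (1 - (e t) ^ 2) / μ) *
          (-Real.cos (s t) * ϱR t +
            (2 * Real.sin (s t) -
              e t * Real.sin (v t) * Real.cos (s t) / (1 + e t * Real.cos (v t))) * ϱT t)) t := by
  intro t
  have hσ : ∀ τ, Ω τ + ω τ + v τ - s τ = (Ω τ + ω τ) - (s τ - v τ) := fun τ => by ring
  have hex : (fun τ => e τ * cos (Ω τ + ω τ) * cos (Ω τ + ω τ + v τ - s τ) +
      e τ * sin (Ω τ + ω τ) * sin (Ω τ + ω τ + v τ - s τ)) = fun τ => e τ * cos (s τ - v τ) :=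
    funext fun τ => by
      rw [hσ, ← cos_mul_cos_sub_add_sin_mul_sin_sub (Ω τ + ω τ) (s τ - v τ)]; ring
  have hey : (fun τ => -(e τ * cos (Ω τ + ω τ)) * sin (Ω τ + ω τ + v τ - s τ) +
      e τ * sin (Ω τ + ω τ) * cos (Ω τ + ω τ + v τ - s τ)) = fun τ => e τ * sin (s τ - v τ) :=
    funext fun τ => by
      rw [hσ, ← sin_mul_cos_sub_sub_cos_mul_sin_sub (Ω τ + ω τ) (s τ - v τ)]; ring
  have hsv : HasDerivAt (fun τ => s τ - v τ) _ t := (hS t).sub (hV t)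
  have he := (he0 t).ne'
  have hd := (hden t).ne'
  rw [hex, hey]
  constructor
  · refine ((hE t).mul hsv.cos).congr_deriv ?_
    rw [← gauss_rotated_eccentricity_x_rate (s t) _ (ϱR t) (ϱT t) he hd]
    ring
  · refine ((hE t).mul hsv.sin).congr_deriv ?_
    rw [← gauss_rotated_eccentricity_y_rate (s t) _ (ϱR t) (ϱT t) he hd]
    ring

/-- Under Gauss' variational equations, the rotated eccentricity-vector components
e_x = e·cos(Ω+ω)·cos σ + e·sin(Ω+ω)·sin σ and e_y = −e·cos(Ω+ω)·sin σ + e·sin(Ω+ω)·cos σ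
(with σ = Ω + ω + v − s) are differentiable with the stated derivatives; in particular
neither derivative depends on the normal perturbation ϱ_N. -/
theorem rotated_eccentricity_deriv_independent_of_normal_perturbation
    (μ : ℝ) (a e i ω Ω v s ϱR ϱT ϱN : ℝ → ℝ)
    (hμ : 0 < μ)
    (ha : ∀ t, 0 < a t)
    (he0 : ∀ t, 0 < e t) (he1 : ∀ t, e t < 1)
    (hsini : ∀ t, Real.sin (i t) ≠ 0)
    (hcosi : ∀ t, Real.cos (i t / 2) ≠ 0)
    (hden : ∀ t, 0 < 1 + e t * Real.cos (v t))
    (hA : ∀ t, HasDerivAt a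
      (2 * (a t) ^ 2 / Real.sqrt (μ * a t * (1 - (e t) ^ 2)) *
        (e t * Real.sin (v t) * ϱR t + (1 + e t * Real.cos (v t)) * ϱT t)) t)
    (hE : ∀ t, HasDerivAt e
      (Real.sqrt (a t * (1 - (e t) ^ 2) / μ) *
        (Real.sin (v t) * ϱR t +
          (e t + (2 + e t * Real.cos (v t)) * Real.cos (v t)) / (1 + e t * Real.cos (v t)) * ϱT t)) t)
    (hI : ∀ t, HasDerivAt i
      (Real.sqrt (a t * (1 - (e t) ^ 2) / μ) *
        (Real.cos (v t + ω t) / (1 + e t * Real.cos (v t)) * ϱN t)) t)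
    (hΩ : ∀ t, HasDerivAt Ω
      (Real.sqrt (a t * (1 - (e t) ^ 2) / μ) *
        (Real.sin (v t + ω t) / ((1 + e t * Real.cos (v t)) * Real.sin (i t)) * ϱN t)) t)
    (hω : ∀ t, HasDerivAt ω
      (Real.sqrt (a t * (1 - (e t) ^ 2) / μ) *
        (-(Real.cos (v t) / e t) * ϱR t +
          (2 + e t * Real.cos (v t)) * Real.sin (v t) / (e t * (1 + e t * Real.cos (v t))) * ϱT t -
          Real.sin (v t + ω t) * Real.cot (i t) / (1 + e t * Real.cos (v t)) * ϱN t)) t)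
    (hV : ∀ t, HasDerivAt v
      (Real.sqrt (μ / (a t) ^ 3) * (1 + e t * Real.cos (v t)) ^ 2 / (1 - (e t) ^ 2) ^ ((3 : ℝ) / 2) +
        Real.sqrt (a t * (1 - (e t) ^ 2) / μ) *
          (Real.cos (v t) / e t * ϱR t -
            (2 + e t * Real.cos (v t)) * Real.sin (v t) / (e t * (1 + e t * Real.cos (v t))) * ϱT t)) t)
    (hS : ∀ t, HasDerivAt s
      (Real.sqrt (μ / (a t) ^ 3) * (1 + e t * Real.cos (v t)) ^ 2 / (1 - (e t) ^ 2) ^ ((3 : ℝ) / 2)) t) :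
    ∀ t,
      HasDerivAt (fun τ => e τ * Real.cos (Ω τ + ω τ) * Real.cos (Ω τ + ω τ + v τ - s τ) +
          e τ * Real.sin (Ω τ + ω τ) * Real.sin (Ω τ + ω τ + v τ - s τ))
        (Real.sqrt (a t * (1 - (e t) ^ 2) / μ) *
          (Real.sin (s t) * ϱR t +
            (2 * Real.cos (s t) +
              e t * Real.sin (v t) * Real.sin (s t) / (1 + e t * Real.cos (v t))) * ϱT t)) t ∧
      HasDerivAt (fun τ => -(e τ * Real.cos (Ω τ + ω τ)) * Real.sin (Ω τ + ω τ + v τ - s τ) +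
          e τ * Real.sin (Ω τ + ω τ) * Real.cos (Ω τ + ω τ + v τ - s τ))
        (Real.sqrt (a t * (1 - (e t) ^ 2) / μ) *
          (-Real.cos (s t) * ϱR t +
            (2 * Real.sin (s t) -
              e t * Real.sin (v t) * Real.cos (s t) / (1 + e t * Real.cos (v t))) * ϱT t)) t :=
  rotated_eccentricity_deriv_independent_of_normal_perturbation_general μ a e ω Ω v s ϱR ϱT he0 hden
    hE hV hS
end

section
/- Under Gauss' variational equations, the rotated node-vector components h_x = tan(i/2)·cos(Ω)·cos(σ) + tan(i/2)·sin(Ω)·sin(σ) and h_y = −tan(i/2)·cos(Ω)·sin(σ) + tan(i/2)·sin(Ω)·cos(σ), where σ = Ω + ω + v − s, are differentiable with derivatives h_x'(t) = (√(a(1−e²)/μ)/(1+e·cos(v)))·( h_x·h_y·sin(s) + ((1+h_x²−h_y²)/2)·cos(s) )·ϱ_N(t) and h_y'(t) = (√(a(1−e²)/μ)/(1+e·cos(v)))·( h_x·h_y·cos(s) + ((1−h_x²+h_y²)/2)·sin(s) )·ϱ_N(t) at every t; in particular these derivatives depend only on the normal perturbation ϱ_N and not on ϱ_R, ϱ_T.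 -/
/-!
Write `u = σ - Ω = ω + v - s` and `T = tan (i / 2)`. Undoing the rotation by `Ω` gives
`(h_x, h_y) = T · (cos u, -sin u)`, so `Ω` drops out. In `u' = ω' + v' - s'` the `ϱ_R`, `ϱ_T`
terms of `ω'` and `v'` cancel, as do the Keplerian part of `v'` and `s'`; hence `i'` and `u'` are
multiples of `ϱ_N`. The half-angle identity `T · cot i = (1 - T²) / 2` then makes both
`T' = (1 + T²) i' / 2` and `T u'` polynomial in `h_x`, `h_y`.
-/
open Real

theorem Real.tan_half_mul_cot {x : ℝ} (hx : sin x ≠ 0) :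
    tan (x / 2) * cot x = (1 - tan (x / 2) ^ 2) / 2 := by
  obtain ⟨y, rfl⟩ : ∃ y, x = 2 * y := ⟨x / 2, by ring⟩
  rw [sin_two_mul] at hx
  have hsin : sin y ≠ 0 := by contrapose! hx; simp [hx]
  have hcos : cos y ≠ 0 := by contrapose! hx; simp [hx]
  rw [mul_div_cancel_left₀ y two_ne_zero, cot_eq_cos_div_sin, tan_eq_sin_div_cos, sin_two_mul,
    cos_two_mul']
  field_simp

theorem HasDerivAt.tan_half {f : ℝ → ℝ} {f' t : ℝ} (hf : HasDerivAt f f' t)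
    (hcos : Real.cos (f t / 2) ≠ 0) :
    HasDerivAt (fun τ => Real.tan (f τ / 2)) ((1 + Real.tan (f t / 2) ^ 2) / 2 * f') t := by
  have h := (hasDerivAt_tan hcos).comp t (hf.div_const 2)
  refine h.congr_deriv ?_
  rw [one_div, ← inv_one_add_tan_sq hcos, inv_inv]
  ring

theorem hasDerivAt_rotated_node {i u hx hy : ℝ → ℝ} {F s t : ℝ}
    (hhx : ∀ τ, hx τ = tan (i τ / 2) * cos (u τ))
    (hhy : ∀ τ, hy τ = -(tan (i τ / 2) * sin (u τ)))
    (hsin : sin (i t) ≠ 0) (hcos : cos (i t / 2) ≠ 0)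
    (hi : HasDerivAt i (F * cos (u t + s)) t)
    (hu : HasDerivAt u (-(F * sin (u t + s) * cot (i t))) t) :
    HasDerivAt hx (F * (hx t * hy t * sin s + (1 + hx t ^ 2 - hy t ^ 2) / 2 * cos s)) t ∧
      HasDerivAt hy (F * (hx t * hy t * cos s + (1 - hx t ^ 2 + hy t ^ 2) / 2 * sin s)) t := by
  have hT := hi.tan_half hcos
  have hcot := tan_half_mul_cot hsin
  have hpyth := sin_sq_add_cos_sq (u t)
  rw [hhx, hhy, funext hhx, funext hhy]
  constructor
  · refine (hT.mul hu.cos).congr_deriv ?_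
    rw [cos_add, sin_add]
    linear_combination
      F * sin (u t) * (sin (u t) * cos s + cos (u t) * sin s) * hcot + F / 2 * cos s * hpyth
  · refine (hT.mul hu.sin).neg.congr_deriv ?_
    rw [cos_add, sin_add]
    linear_combination
      F * cos (u t) * (sin (u t) * cos s + cos (u t) * sin s) * hcot + F / 2 * sin s * hpyth

theorem rotated_node_deriv_depends_only_on_normal_perturbation_general
    (μ : ℝ) (a e i ω Ω v s ϱR ϱT ϱN : ℝ → ℝ)
    (hsini : ∀ t, Real.sin (i t) ≠ 0)
    (hcosi : ∀ t, Real.cos (i t / 2) ≠ 0)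
    (hI : ∀ t, HasDerivAt i
      (Real.sqrt (a t * (1 - (e t) ^ 2) / μ) *
        (Real.cos (v t + ω t) / (1 + e t * Real.cos (v t)) * ϱN t)) t)
    (hω : ∀ t, HasDerivAt ω
      (Real.sqrt (a t * (1 - (e t) ^ 2) / μ) *
        (-(Real.cos (v t) / e t) * ϱR t +
          (2 + e t * Real.cos (v t)) * Real.sin (v t) / (e t * (1 + e t * Real.cos (v t))) * ϱT t -
          Real.sin (v t + ω t) * Real.cot (i t) / (1 + e t * Real.cos (v t)) * ϱN t)) t)
    (hV : ∀ t, HasDerivAt v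
      (Real.sqrt (μ / (a t) ^ 3) * (1 + e t * Real.cos (v t)) ^ 2 / (1 - (e t) ^ 2) ^ ((3 : ℝ) / 2) +
        Real.sqrt (a t * (1 - (e t) ^ 2) / μ) *
          (Real.cos (v t) / e t * ϱR t -
            (2 + e t * Real.cos (v t)) * Real.sin (v t) / (e t * (1 + e t * Real.cos (v t))) * ϱT t)) t)
    (hS : ∀ t, HasDerivAt s
      (Real.sqrt (μ / (a t) ^ 3) * (1 + e t * Real.cos (v t)) ^ 2 / (1 - (e t) ^ 2) ^ ((3 : ℝ) / 2)) t)
    (hx hy : ℝ → ℝ)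
    (hhx : ∀ τ, hx τ = Real.tan (i τ / 2) * Real.cos (Ω τ) * Real.cos (Ω τ + ω τ + v τ - s τ) +
      Real.tan (i τ / 2) * Real.sin (Ω τ) * Real.sin (Ω τ + ω τ + v τ - s τ))
    (hhy : ∀ τ, hy τ = -(Real.tan (i τ / 2) * Real.cos (Ω τ)) * Real.sin (Ω τ + ω τ + v τ - s τ) +
      Real.tan (i τ / 2) * Real.sin (Ω τ) * Real.cos (Ω τ + ω τ + v τ - s τ)) :
    ∀ t,
      HasDerivAt hx
        (Real.sqrt (a t * (1 - (e t) ^ 2) / μ) / (1 + e t * Real.cos (v t)) *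
          (hx t * hy t * Real.sin (s t) +
            (1 + (hx t) ^ 2 - (hy t) ^ 2) / 2 * Real.cos (s t)) * ϱN t) t ∧
      HasDerivAt hy
        (Real.sqrt (a t * (1 - (e t) ^ 2) / μ) / (1 + e t * Real.cos (v t)) *
          (hx t * hy t * Real.cos (s t) +
            (1 - (hx t) ^ 2 + (hy t) ^ 2) / 2 * Real.sin (s t)) * ϱN t) t := by
  intro t
  set F := Real.sqrt (a t * (1 - (e t) ^ 2) / μ) / (1 + e t * Real.cos (v t)) * ϱN t
  have hvω : v t + ω t = (ω t + v t - s t) + s t := by ring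
  have hi : HasDerivAt i (F * cos ((ω t + v t - s t) + s t)) t :=
    (hI t).congr_deriv (by rw [← hvω]; ring)
  have hu : HasDerivAt (fun τ => ω τ + v τ - s τ)
      (-(F * sin ((ω t + v t - s t) + s t) * cot (i t))) t :=
    (((hω t).add (hV t)).sub (hS t)).congr_deriv (by rw [← hvω]; ring)
  have hx_eq : ∀ τ, hx τ = tan (i τ / 2) * cos (ω τ + v τ - s τ) := fun τ => by
    rw [hhx, show ω τ + v τ - s τ = (Ω τ + ω τ + v τ - s τ) - Ω τ by ring,
      cos_sub (Ω τ + ω τ + v τ - s τ)]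
    ring
  have hy_eq : ∀ τ, hy τ = -(tan (i τ / 2) * sin (ω τ + v τ - s τ)) := fun τ => by
    rw [hhy, show ω τ + v τ - s τ = (Ω τ + ω τ + v τ - s τ) - Ω τ by ring,
      sin_sub (Ω τ + ω τ + v τ - s τ)]
    ring
  obtain ⟨hdx, hdy⟩ := hasDerivAt_rotated_node hx_eq hy_eq (hsini t) (hcosi t) hi hu
  exact ⟨hdx.congr_deriv (by ring), hdy.congr_deriv (by ring)⟩

/-- Under Gauss' variational equations, the rotated node-vector components
h_x = tan(i/2)·cos Ω·cos σ + tan(i/2)·sin Ω·sin σ and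
h_y = −tan(i/2)·cos Ω·sin σ + tan(i/2)·sin Ω·cos σ (with σ = Ω + ω + v − s) are
differentiable with the stated derivatives, which depend only on ϱ_N. -/
theorem rotated_node_deriv_depends_only_on_normal_perturbation
    (μ : ℝ) (a e i ω Ω v s ϱR ϱT ϱN : ℝ → ℝ)
    (hμ : 0 < μ)
    (ha : ∀ t, 0 < a t)
    (he0 : ∀ t, 0 < e t) (he1 : ∀ t, e t < 1)
    (hsini : ∀ t, Real.sin (i t) ≠ 0)
    (hcosi : ∀ t, Real.cos (i t / 2) ≠ 0)
    (hden : ∀ t, 0 < 1 + e t * Real.cos (v t))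
    (hA : ∀ t, HasDerivAt a
      (2 * (a t) ^ 2 / Real.sqrt (μ * a t * (1 - (e t) ^ 2)) *
        (e t * Real.sin (v t) * ϱR t + (1 + e t * Real.cos (v t)) * ϱT t)) t)
    (hE : ∀ t, HasDerivAt e
      (Real.sqrt (a t * (1 - (e t) ^ 2) / μ) *
        (Real.sin (v t) * ϱR t +
          (e t + (2 + e t * Real.cos (v t)) * Real.cos (v t)) / (1 + e t * Real.cos (v t)) * ϱT t)) t)
    (hI : ∀ t, HasDerivAt i
      (Real.sqrt (a t * (1 - (e t) ^ 2) / μ) *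
        (Real.cos (v t + ω t) / (1 + e t * Real.cos (v t)) * ϱN t)) t)
    (hΩ : ∀ t, HasDerivAt Ω
      (Real.sqrt (a t * (1 - (e t) ^ 2) / μ) *
        (Real.sin (v t + ω t) / ((1 + e t * Real.cos (v t)) * Real.sin (i t)) * ϱN t)) t)
    (hω : ∀ t, HasDerivAt ω
      (Real.sqrt (a t * (1 - (e t) ^ 2) / μ) *
        (-(Real.cos (v t) / e t) * ϱR t +
          (2 + e t * Real.cos (v t)) * Real.sin (v t) / (e t * (1 + e t * Real.cos (v t))) * ϱT t -
          Real.sin (v t + ω t) * Real.cot (i t) / (1 + e t * Real.cos (v t)) * ϱN t)) t)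
    (hV : ∀ t, HasDerivAt v
      (Real.sqrt (μ / (a t) ^ 3) * (1 + e t * Real.cos (v t)) ^ 2 / (1 - (e t) ^ 2) ^ ((3 : ℝ) / 2) +
        Real.sqrt (a t * (1 - (e t) ^ 2) / μ) *
          (Real.cos (v t) / e t * ϱR t -
            (2 + e t * Real.cos (v t)) * Real.sin (v t) / (e t * (1 + e t * Real.cos (v t))) * ϱT t)) t)
    (hS : ∀ t, HasDerivAt s
      (Real.sqrt (μ / (a t) ^ 3) * (1 + e t * Real.cos (v t)) ^ 2 / (1 - (e t) ^ 2) ^ ((3 : ℝ) / 2)) t)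
    (hx hy : ℝ → ℝ)
    (hhx : ∀ τ, hx τ = Real.tan (i τ / 2) * Real.cos (Ω τ) * Real.cos (Ω τ + ω τ + v τ - s τ) +
      Real.tan (i τ / 2) * Real.sin (Ω τ) * Real.sin (Ω τ + ω τ + v τ - s τ))
    (hhy : ∀ τ, hy τ = -(Real.tan (i τ / 2) * Real.cos (Ω τ)) * Real.sin (Ω τ + ω τ + v τ - s τ) +
      Real.tan (i τ / 2) * Real.sin (Ω τ) * Real.cos (Ω τ + ω τ + v τ - s τ)) :
    ∀ t,
      HasDerivAt hx
        (Real.sqrt (a t * (1 - (e t) ^ 2) / μ) / (1 + e t * Real.cos (v t)) *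
          (hx t * hy t * Real.sin (s t) +
            (1 + (hx t) ^ 2 - (hy t) ^ 2) / 2 * Real.cos (s t)) * ϱN t) t ∧
      HasDerivAt hy
        (Real.sqrt (a t * (1 - (e t) ^ 2) / μ) / (1 + e t * Real.cos (v t)) *
          (hx t * hy t * Real.cos (s t) +
            (1 - (hx t) ^ 2 + (hy t) ^ 2) / 2 * Real.sin (s t)) * ϱN t) t :=
  rotated_node_deriv_depends_only_on_normal_perturbation_general μ a e i ω Ω v s ϱR ϱT ϱN hsini
    hcosi hI hω hV hS hx hy hhx hhy
end

section
/- For all real numbers h_x, h_y, s, σ, the identity (cos(s−σ)·(h_x²−h_y²) + 2·sin(s−σ)·h_x·h_y + cos(s+σ))² + (sin(s−σ)·(h_y²−h_x²) + 2·cos(s−σ)·h_x·h_y + sin(s+σ))² + (2·(h_x·sin(s) − h_y·cos(s)))² = (1 + h_x² + h_y²)² holds. Consequently, for ρ > 0 and κ_c > 0, the satellite-Earth vector r_es = κ_r·(cos(s−σ)(h_x²−h_y²) + 2sin(s−σ)h_xh_y + cos(s+σ), sin(s−σ)(h_y²−h_x²) + 2cos(s−σ)h_xh_y + sin(s+σ),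 2(h_x sin(s) − h_y cos(s))) with κ_r = −R_e·ρ/(κ_c·(1+h_x²+h_y²)) has Euclidean norm ‖r_es‖ = R_e·ρ/κ_c (the orbital radius). -/
/-!
Identify the plane with `ℂ`, and put `h = h_x + i h_y`, `w = e^{is}`. The first two components
of the bracketed vector are the complex number `e^{i(σ - s)} (h² + w²)` and the third is
`2 Im(h̄ w)`, so the rotation by `σ - s` drops out and the claim becomes
`|h² + w²|² + (2 Im(h̄ w))² = (|h|² + |w|²)²`, which in real coordinates is Euler's
parametrization of Pythagorean quadruples.
-/

open Real

theorem euler_pythagorean_quadruple {R : Type*} [CommRing R] (m n p q : R) :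
    (m ^ 2 + n ^ 2 - p ^ 2 - q ^ 2) ^ 2 + (2 * (m * p + n * q)) ^ 2 + (2 * (m * q - n * p)) ^ 2 =
      (m ^ 2 + n ^ 2 + p ^ 2 + q ^ 2) ^ 2 := by
  ring

theorem rotation_sq_add_sq (θ u v : ℝ) :
    (cos θ * u - sin θ * v) ^ 2 + (sin θ * u + cos θ * v) ^ 2 = u ^ 2 + v ^ 2 := by
  linear_combination (u ^ 2 + v ^ 2) * sin_sq_add_cos_sq θ

section IdealElements

variable (h_x h_y s σ : ℝ)

theorem earth_direction_fst_eq_rotation :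
    cos (s - σ) * (h_x ^ 2 - h_y ^ 2) + 2 * sin (s - σ) * h_x * h_y + cos (s + σ) =
      cos (σ - s) * (h_x ^ 2 + cos s ^ 2 - h_y ^ 2 - sin s ^ 2) -
        sin (σ - s) * (2 * (h_x * h_y + cos s * sin s)) := by
  rw [cos_sub, sin_sub, cos_sub, sin_sub, cos_add]
  linear_combination (sin σ * sin s - cos σ * cos s) * sin_sq_add_cos_sq s

theorem earth_direction_snd_eq_rotation :
    sin (s - σ) * (h_y ^ 2 - h_x ^ 2) + 2 * cos (s - σ) * h_x * h_y + sin (s + σ) =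
      sin (σ - s) * (h_x ^ 2 + cos s ^ 2 - h_y ^ 2 - sin s ^ 2) +
        cos (σ - s) * (2 * (h_x * h_y + cos s * sin s)) := by
  rw [cos_sub, sin_sub, cos_sub, sin_sub, sin_add]
  linear_combination (-(sin s * cos σ) - cos s * sin σ) * sin_sq_add_cos_sq s

theorem earth_direction_sq_sum :
    (cos (s - σ) * (h_x ^ 2 - h_y ^ 2) + 2 * sin (s - σ) * h_x * h_y + cos (s + σ)) ^ 2 +
      (sin (s - σ) * (h_y ^ 2 - h_x ^ 2) + 2 * cos (s - σ) * h_x * h_y + sin (s + σ)) ^ 2 +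
      (2 * (h_x * sin s - h_y * cos s)) ^ 2 = (1 + h_x ^ 2 + h_y ^ 2) ^ 2 := by
  rw [earth_direction_fst_eq_rotation, earth_direction_snd_eq_rotation, rotation_sq_add_sq,
    ← sin_sq_add_cos_sq s]
  linear_combination euler_pythagorean_quadruple h_x (cos s) h_y (sin s)

end IdealElements

theorem norm_euclidean_fin_three (a b c : ℝ) :
    ‖((WithLp.equiv 2 (Fin 3 → ℝ)).symm ![a, b, c] : EuclideanSpace ℝ (Fin 3))‖ =
      √(a ^ 2 + b ^ 2 + c ^ 2) := by
  simp [EuclideanSpace.norm_eq, Fin.sum_univ_three, add_assoc]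

/-- The bracketed vector in the ideal-element expression of the satellite-Earth vector has
squared norm (1 + h_x² + h_y²)²; consequently, with κ_r = −R_e·ρ/(κ_c·(1+h_x²+h_y²)),
the satellite-Earth vector r_es has Euclidean norm R_e·ρ/κ_c (the orbital radius). -/
theorem satellite_earth_vector_norm
    (h_x h_y s σ : ℝ) :
    (Real.cos (s - σ) * (h_x ^ 2 - h_y ^ 2) + 2 * Real.sin (s - σ) * h_x * h_y +
        Real.cos (s + σ)) ^ 2 +
      (Real.sin (s - σ) * (h_y ^ 2 - h_x ^ 2) + 2 * Real.cos (s - σ) * h_x * h_y +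
        Real.sin (s + σ)) ^ 2 +
      (2 * (h_x * Real.sin s - h_y * Real.cos s)) ^ 2 = (1 + h_x ^ 2 + h_y ^ 2) ^ 2 ∧
    ∀ (Re ρ κc : ℝ), 0 < Re → 0 < ρ → 0 < κc →
      ‖((WithLp.equiv 2 (Fin 3 → ℝ)).symm
          ![-(Re * ρ) / (κc * (1 + h_x ^ 2 + h_y ^ 2)) *
              (Real.cos (s - σ) * (h_x ^ 2 - h_y ^ 2) + 2 * Real.sin (s - σ) * h_x * h_y +
                Real.cos (s + σ)),
            -(Re * ρ) / (κc * (1 + h_x ^ 2 + h_y ^ 2)) *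
              (Real.sin (s - σ) * (h_y ^ 2 - h_x ^ 2) + 2 * Real.cos (s - σ) * h_x * h_y +
                Real.sin (s + σ)),
            -(Re * ρ) / (κc * (1 + h_x ^ 2 + h_y ^ 2)) *
              (2 * (h_x * Real.sin s - h_y * Real.cos s))] : EuclideanSpace ℝ (Fin 3))‖ =
        Re * ρ / κc := by
  refine ⟨earth_direction_sq_sum h_x h_y s σ, fun Re ρ κc hRe hρ hκc => ?_⟩
  set κr := -(Re * ρ) / (κc * (1 + h_x ^ 2 + h_y ^ 2))
  have hκr : (κr * (1 + h_x ^ 2 + h_y ^ 2)) ^ 2 = (Re * ρ / κc) ^ 2 := by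
    simp only [κr]
    field_simp
  have hsq : (κr * (cos (s - σ) * (h_x ^ 2 - h_y ^ 2) + 2 * sin (s - σ) * h_x * h_y +
        cos (s + σ))) ^ 2 +
      (κr * (sin (s - σ) * (h_y ^ 2 - h_x ^ 2) + 2 * cos (s - σ) * h_x * h_y +
        sin (s + σ))) ^ 2 + (κr * (2 * (h_x * sin s - h_y * cos s))) ^ 2 =
      (Re * ρ / κc) ^ 2 := by
    linear_combination κr ^ 2 * earth_direction_sq_sum h_x h_y s σ + hκr
  rw [norm_euclidean_fin_three, hsq, sqrt_sq (by positivity)]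
end
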